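/- Every wEMV-algebra (M; ∨, ∧, ⊕, ⊖, 0) can be embedded into a wEMV-algebra with a top element; that is, there exist a wEMV-algebra (N; ∨, ∧, ⊕, ⊖, 0) having a greatest element and an injective map f : M → N satisfying f(0) = 0 and f(x * y) = f(x) * f(y) for every * ∈ {∨, ∧, ⊕, ⊖} and all x, y ∈ M. -/

import Mathlib

universe u

class WEMV (M : Type u) extends DistribLattice M, Zero M where
  oplus : M → M → M
  ominus : M → M → M
  zero_le : ∀ x : M, 0 ≤ x
  oplus_comm : ∀ x y : M, oplus x y = oplus y x
  oplus_assoc : ∀ x y z : M, oplus (oplus x y) z = oplus x (oplus y z)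
  oplus_zero : ∀ x : M, oplus x 0 = x
  ominus_oplus_le : ∀ x y : M, ominus (oplus x y) x ≤ y
  oplus_ominus : ∀ x y : M, oplus x (ominus y x) = x ⊔ y
  ominus_inf : ∀ x y : M, ominus x (x ⊓ y) = ominus x y
  ominus_ominus : ∀ x z : M, ominus z (ominus z x) = x ⊓ z
  ominus_sup : ∀ x y z : M, ominus z (x ⊔ y) = ominus z x ⊓ ominus z y
  inf_ominus : ∀ x y z : M, ominus (x ⊓ y) z = ominus x z ⊓ ominus y z
  ominus_oplus_assoc : ∀ x y z : M, ominus x (oplus y z) = ominus (ominus x y) z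
  oplus_sup : ∀ x y z : M, oplus x (y ⊔ z) = oplus x y ⊔ oplus x z

open WEMV

def IsWEMVEmbedding {M : Type u} [WEMV M] {N : Type u} [WEMV N] (f : M → N) : Prop :=
  Function.Injective f ∧ f 0 = 0 ∧
  (∀ x y : M, f (x ⊔ y) = f x ⊔ f y) ∧
  (∀ x y : M, f (x ⊓ y) = f x ⊓ f y) ∧
  (∀ x y : M, f (oplus x y) = oplus (f x) (f y)) ∧
  (∀ x y : M, f (ominus x y) = ominus (f x) (f y))

def HasTop (N : Type u) [WEMV N] : Prop := ∃ t : N, ∀ y : N, y ≤ t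

/-!
The prime ideals of a wEMV-algebra separate its points: for an ideal `P` the relation
`x ⊖ y, y ⊖ x ∈ P` is a congruence, the quotient is a chain when `P` is prime, and by Zorn's
lemma every `c ≠ 0` avoids some prime ideal. So `M` embeds into the product of its linearly
ordered quotients, and it suffices to give each chain a top. A chain without top is
cancellative, `(x ⊕ y) ⊖ x = y`, and a cancellative chain `C` embeds into `C` with formal
complements `1 ⊖ a` adjoined above it, an algebra with top `1`.
-/

instance {ι : Type*} {N : ι → Type*} [∀ i, WEMV (N i)] : WEMV (∀ i, N i) where
  oplus x y i := oplus (x i) (y i)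
  ominus x y i := ominus (x i) (y i)
  zero_le x i := zero_le (x i)
  oplus_comm x y := funext fun i => oplus_comm (x i) (y i)
  oplus_assoc x y z := funext fun i => oplus_assoc (x i) (y i) (z i)
  oplus_zero x := funext fun i => oplus_zero (x i)
  ominus_oplus_le x y i := ominus_oplus_le (x i) (y i)
  oplus_ominus x y := funext fun i => oplus_ominus (x i) (y i)
  ominus_inf x y := funext fun i => ominus_inf (x i) (y i)
  ominus_ominus x z := funext fun i => ominus_ominus (x i) (z i)
  ominus_sup x y z := funext fun i => ominus_sup (x i) (y i) (z i)
  inf_ominus x y z := funext fun i => inf_ominus (x i) (y i) (z i)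
  ominus_oplus_assoc x y z := funext fun i => ominus_oplus_assoc (x i) (y i) (z i)
  oplus_sup x y z := funext fun i => oplus_sup (x i) (y i) (z i)

theorem hasTop_pi {ι : Type u} {N : ι → Type u} [∀ i, WEMV (N i)] (h : ∀ i, HasTop (N i)) :
    HasTop (∀ i, N i) := by
  choose t ht using h
  exact ⟨t, fun y i => ht i (y i)⟩

theorem IsWEMVEmbedding.comp {A B C : Type u} [WEMV A] [WEMV B] [WEMV C] {f : A → B} {g : B → C}
    (hg : IsWEMVEmbedding g) (hf : IsWEMVEmbedding f) : IsWEMVEmbedding (g ∘ f) := by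
  obtain ⟨hg_inj, hg0, hg_sup, hg_inf, hg_oplus, hg_ominus⟩ := hg
  obtain ⟨hf_inj, hf0, hf_sup, hf_inf, hf_oplus, hf_ominus⟩ := hf
  refine ⟨hg_inj.comp hf_inj, ?_, ?_, ?_, ?_, ?_⟩ <;> intros <;>
    simp only [Function.comp_apply, *]

theorem IsWEMVEmbedding.piMap {ι : Type u} {A B : ι → Type u} [∀ i, WEMV (A i)]
    [∀ i, WEMV (B i)] {f : ∀ i, A i → B i} (hf : ∀ i, IsWEMVEmbedding (f i)) :
    IsWEMVEmbedding (Pi.map f) :=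
  ⟨.piMap fun i => (hf i).1, funext fun i => (hf i).2.1,
    fun _ _ => funext fun i => (hf i).2.2.1 _ _, fun _ _ => funext fun i => (hf i).2.2.2.1 _ _,
    fun _ _ => funext fun i => (hf i).2.2.2.2.1 _ _,
    fun _ _ => funext fun i => (hf i).2.2.2.2.2 _ _⟩

namespace WEMV

attribute [simp] oplus_zero

variable {M : Type u} [WEMV M]

@[simp] theorem zero_oplus (x : M) : oplus 0 x = x := by rw [oplus_comm, oplus_zero]

@[simp] theorem ominus_zero (x : M) : ominus x 0 = x := by
  simpa only [zero_oplus, sup_eq_right.2 (zero_le x)] using oplus_ominus (0 : M) x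

@[simp] theorem ominus_self (x : M) : ominus x x = 0 := by
  simpa only [ominus_zero, inf_eq_left.2 (zero_le x)] using ominus_ominus (0 : M) x

theorem ominus_eq_zero_iff_le {a b : M} : ominus a b = 0 ↔ a ≤ b := by
  refine ⟨fun h => ?_, fun h => by rw [← ominus_inf, inf_eq_left.2 h, ominus_self]⟩
  simpa only [h, oplus_zero, left_eq_sup] using oplus_ominus b a

@[simp] theorem zero_ominus (x : M) : ominus 0 x = 0 := ominus_eq_zero_iff_le.2 (zero_le x)

theorem oplus_le_oplus {a b c d : M} (hab : a ≤ b) (hcd : c ≤ d) : oplus a c ≤ oplus b d := by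
  have mono_right : ∀ {x y : M} (z : M), x ≤ y → oplus z x ≤ oplus z y := fun z h => by
    rw [← sup_eq_right, ← oplus_sup, sup_eq_right.2 h]
  calc oplus a c ≤ oplus a d := mono_right a hcd
    _ = oplus d a := oplus_comm a d
    _ ≤ oplus d b := mono_right d hab
    _ = oplus b d := oplus_comm d b

theorem oplus_left_comm (a b c : M) : oplus a (oplus b c) = oplus b (oplus a c) := by
  rw [← oplus_assoc, oplus_comm a b, oplus_assoc]

theorem ominus_right_comm (a b c : M) : ominus (ominus a b) c = ominus (ominus a c) b := by
  rw [← ominus_oplus_assoc, oplus_comm, ominus_oplus_assoc]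

theorem le_self_oplus (a b : M) : a ≤ oplus a b :=
  (oplus_zero a).symm.trans_le (oplus_le_oplus le_rfl (zero_le b))

theorem le_oplus_self (a b : M) : b ≤ oplus a b := oplus_comm b a ▸ le_self_oplus b a

theorem ominus_le_ominus_right {a b : M} (h : a ≤ b) (c : M) : ominus a c ≤ ominus b c := by
  rw [← inf_eq_left.2 h, inf_ominus]
  exact inf_le_right

theorem ominus_le_ominus_left {a b : M} (h : a ≤ b) (c : M) : ominus c b ≤ ominus c a := by
  rw [← sup_eq_right.2 h, ominus_sup]
  exact inf_le_left

theorem ominus_le_self (a b : M) : ominus a b ≤ a :=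
  (ominus_le_ominus_left (zero_le b) a).trans_eq (ominus_zero a)

theorem le_oplus_ominus (a b : M) : a ≤ oplus b (ominus a b) :=
  (oplus_ominus b a).symm ▸ le_sup_right

theorem oplus_ominus_cancel_of_le {a b : M} (h : a ≤ b) : oplus a (ominus b a) = b := by
  rw [oplus_ominus, sup_eq_right.2 h]

theorem ominus_oplus_le_right (a b : M) : ominus (oplus a b) b ≤ a :=
  oplus_comm b a ▸ ominus_oplus_le b a

theorem oplus_inf (a b c : M) : oplus a (b ⊓ c) = oplus a b ⊓ oplus a c := by
  refine le_antisymm (le_inf (oplus_le_oplus le_rfl inf_le_left)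
    (oplus_le_oplus le_rfl inf_le_right)) ?_
  set t := oplus a b ⊓ oplus a c
  have h : ominus t a ≤ b ⊓ c :=
    le_inf ((ominus_le_ominus_right inf_le_left a).trans (ominus_oplus_le a b))
      ((ominus_le_ominus_right inf_le_right a).trans (ominus_oplus_le a c))
  exact (le_oplus_ominus t a).trans (oplus_le_oplus le_rfl h)

theorem ominus_inf_ominus_eq_zero (a b : M) : ominus a b ⊓ ominus b a = 0 := by
  refine le_antisymm ?_ (zero_le _)
  calc ominus a b ⊓ ominus b a
      ≤ ominus (a ⊔ b) b ⊓ ominus (a ⊔ b) a :=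
        inf_le_inf (ominus_le_ominus_right le_sup_left b) (ominus_le_ominus_right le_sup_right a)
    _ = 0 := by rw [← ominus_sup, sup_comm b a, ominus_self]

theorem inf_oplus_of_inf_eq_zero {a b : M} (h : a ⊓ b = 0) (c : M) :
    a ⊓ oplus b c = a ⊓ c := by
  refine le_antisymm ?_ (inf_le_inf_left a (le_oplus_self b c))
  have hb : ominus (a ⊓ oplus b c) c ≤ b :=
    (ominus_le_ominus_right inf_le_right c).trans (ominus_oplus_le_right b c)
  have ha : ominus (a ⊓ oplus b c) c ≤ a := (ominus_le_self _ c).trans inf_le_left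
  have h0 : ominus (a ⊓ oplus b c) c = 0 := le_antisymm (h ▸ le_inf ha hb) (zero_le _)
  exact le_inf inf_le_left (ominus_eq_zero_iff_le.1 h0)

theorem ominus_oplus_oplus_le (a b c : M) : ominus (oplus a c) (oplus b c) ≤ ominus a b := by
  rw [oplus_comm b c, ominus_oplus_assoc]
  exact ominus_le_ominus_right (ominus_oplus_le_right a c) b

theorem ominus_oplus_le_oplus_ominus (a b c : M) :
    ominus (oplus a b) c ≤ oplus (ominus a c) b := by
  have h : ominus (ominus (oplus a b) c) b ≤ ominus a c := by
    rw [← ominus_oplus_assoc]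
    exact ominus_oplus_oplus_le a c b
  calc ominus (oplus a b) c ≤ oplus b (ominus (ominus (oplus a b) c) b) := le_oplus_ominus _ b
    _ ≤ oplus b (ominus a c) := oplus_le_oplus le_rfl h
    _ = oplus (ominus a c) b := oplus_comm _ _

theorem ominus_le_ominus_oplus_ominus (a b c : M) :
    ominus a c ≤ oplus (ominus a b) (ominus b c) :=
  calc ominus a c ≤ ominus (oplus b (ominus a b)) c :=
        ominus_le_ominus_right (le_oplus_ominus a b) c
    _ ≤ oplus (ominus b c) (ominus a b) := ominus_oplus_le_oplus_ominus b _ c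
    _ = oplus (ominus a b) (ominus b c) := oplus_comm _ _

theorem ominus_ominus_ominus_right_le (a b c : M) :
    ominus (ominus a c) (ominus b c) ≤ ominus a b :=
  (ominus_le_ominus_right (ominus_le_ominus_oplus_ominus a b c) _).trans
    (ominus_oplus_le_right _ _)

theorem ominus_ominus_ominus_left_le (a b c : M) :
    ominus (ominus c a) (ominus c b) ≤ ominus b a :=
  (ominus_le_ominus_right (ominus_le_ominus_oplus_ominus c b a) _).trans
    (ominus_oplus_le _ _)

def nmul : ℕ → M → M
  | 0, _ => 0
  | n + 1, a => oplus a (nmul n a)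

theorem nmul_add (m n : ℕ) (a : M) : nmul (m + n) a = oplus (nmul m a) (nmul n a) := by
  induction m with
  | zero => rw [Nat.zero_add, nmul, zero_oplus]
  | succ k ih => rw [Nat.succ_add, nmul, nmul, ih, oplus_assoc]

theorem inf_nmul_eq_zero {a b : M} (h : a ⊓ b = 0) (n : ℕ) : a ⊓ nmul n b = 0 := by
  induction n with
  | zero => exact inf_eq_right.2 (zero_le a)
  | succ k ih => rwa [nmul, inf_oplus_of_inf_eq_zero h]

theorem nmul_inf_nmul_eq_zero {a b : M} (h : a ⊓ b = 0) (m n : ℕ) :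
    nmul m a ⊓ nmul n b = 0 := by
  have h' : nmul n b ⊓ a = 0 := by rw [inf_comm]; exact inf_nmul_eq_zero h n
  rw [inf_comm]
  exact inf_nmul_eq_zero h' m

structure Ideal (M : Type u) [WEMV M] where
  carrier : Set M
  zero_mem' : (0 : M) ∈ carrier
  mem_of_le' {x y : M} : x ≤ y → y ∈ carrier → x ∈ carrier
  oplus_mem' {x y : M} : x ∈ carrier → y ∈ carrier → oplus x y ∈ carrier

namespace Ideal

instance : SetLike (Ideal M) M where
  coe := carrier
  coe_injective I J h := by cases I; cases J; congr

instance : PartialOrder (Ideal M) := .ofSetLike (Ideal M) M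

section

variable (I : Ideal M)

theorem zero_mem : (0 : M) ∈ I := I.zero_mem'

theorem mem_of_le {x y : M} (hxy : x ≤ y) (hy : y ∈ I) : x ∈ I := I.mem_of_le' hxy hy

theorem oplus_mem {x y : M} (hx : x ∈ I) (hy : y ∈ I) : oplus x y ∈ I := I.oplus_mem' hx hy

def IsPrime : Prop := ∀ x y : M, ominus x y ∈ I ∨ ominus y x ∈ I

def setoid : Setoid M where
  r x y := ominus x y ∈ I ∧ ominus y x ∈ I
  iseqv :=
    { refl x := by simp only [ominus_self, and_self, I.zero_mem]
      symm h := h.symm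
      trans hxy hyz :=
        ⟨I.mem_of_le (ominus_le_ominus_oplus_ominus _ _ _) (I.oplus_mem hxy.1 hyz.1),
          I.mem_of_le (ominus_le_ominus_oplus_ominus _ _ _) (I.oplus_mem hyz.2 hxy.2)⟩ }

end

section

variable {I : Ideal M}

theorem setoid_oplus {x x' y y' : M} (hx : I.setoid x x') (hy : I.setoid y y') :
    I.setoid (oplus x y) (oplus x' y') := by
  have right : ∀ {a a'} (b : M), I.setoid a a' → I.setoid (oplus a b) (oplus a' b) :=
    fun b h => ⟨I.mem_of_le (ominus_oplus_oplus_le _ _ b) h.1,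
      I.mem_of_le (ominus_oplus_oplus_le _ _ b) h.2⟩
  refine I.setoid.trans (right y hx) ?_
  rw [oplus_comm x' y, oplus_comm x' y']
  exact right x' hy

theorem setoid_ominus {x x' y y' : M} (hx : I.setoid x x') (hy : I.setoid y y') :
    I.setoid (ominus x y) (ominus x' y') :=
  I.setoid.trans
    ⟨I.mem_of_le (ominus_ominus_ominus_right_le _ _ y) hx.1,
      I.mem_of_le (ominus_ominus_ominus_right_le _ _ y) hx.2⟩
    ⟨I.mem_of_le (ominus_ominus_ominus_left_le _ _ x') hy.2,
      I.mem_of_le (ominus_ominus_ominus_left_le _ _ x') hy.1⟩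

-- The lattice operations are terms in `⊕` and `⊖`, so they are compatible for free.
theorem setoid_sup {x x' y y' : M} (hx : I.setoid x x') (hy : I.setoid y y') :
    I.setoid (x ⊔ y) (x' ⊔ y') := by
  rw [← oplus_ominus, ← oplus_ominus]
  exact setoid_oplus hx (setoid_ominus hy hx)

theorem setoid_inf {x x' y y' : M} (hx : I.setoid x x') (hy : I.setoid y y') :
    I.setoid (x ⊓ y) (x' ⊓ y') := by
  rw [← ominus_ominus, ← ominus_ominus]
  exact setoid_ominus hy (setoid_ominus hy hx)

end

instance : Bot (Ideal M) where
  bot :=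
    { carrier := {0}
      zero_mem' := rfl
      mem_of_le' := fun hxy hy => le_antisymm (hxy.trans_eq hy) (zero_le _)
      oplus_mem' := fun hx hy => by rw [Set.mem_singleton_iff.1 hx, hy, oplus_zero]; rfl }

theorem mem_bot {x : M} : x ∈ (⊥ : Ideal M) ↔ x = 0 := Iff.rfl

def adjoin (I : Ideal M) (a : M) : Ideal M where
  carrier := {z | ∃ i ∈ I, ∃ n, z ≤ oplus i (nmul n a)}
  zero_mem' := ⟨0, I.zero_mem, 0, zero_le _⟩
  mem_of_le' := fun hxy ⟨i, hi, n, hy⟩ => ⟨i, hi, n, hxy.trans hy⟩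
  oplus_mem' := fun ⟨i, hi, m, hx⟩ ⟨j, hj, n, hy⟩ =>
    ⟨oplus i j, I.oplus_mem hi hj, m + n, by
    calc _ ≤ oplus (oplus i (nmul m a)) (oplus j (nmul n a)) := oplus_le_oplus hx hy
      _ = oplus (oplus i j) (nmul (m + n) a) := by
        rw [nmul_add, oplus_assoc, oplus_assoc, ← oplus_assoc (nmul m a), oplus_comm (nmul m a),
          oplus_assoc]⟩

theorem le_adjoin (I : Ideal M) (a : M) : I ≤ I.adjoin a :=
  fun x hx => ⟨x, hx, 0, (oplus_zero x).ge⟩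

theorem mem_adjoin_self (I : Ideal M) (a : M) : a ∈ I.adjoin a :=
  ⟨0, I.zero_mem, 1, by rw [zero_oplus, nmul, nmul, oplus_zero]⟩

def chainUnion (c : Set (Ideal M)) (hc : IsChain (· ≤ ·) c) (hne : c.Nonempty) : Ideal M where
  carrier := ⋃ I ∈ c, I
  zero_mem' := Set.mem_biUnion hne.some_mem (hne.some).zero_mem
  mem_of_le' := fun hxy hy => by
    obtain ⟨I, hI, hy⟩ := Set.mem_iUnion₂.1 hy
    exact Set.mem_biUnion hI (I.mem_of_le hxy hy)
  oplus_mem' := fun hx hy => by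
    obtain ⟨I, hI, hx⟩ := Set.mem_iUnion₂.1 hx
    obtain ⟨J, hJ, hy⟩ := Set.mem_iUnion₂.1 hy
    rcases hc.total hI hJ with hIJ | hJI
    · exact Set.mem_biUnion hJ (J.oplus_mem (hIJ hx) hy)
    · exact Set.mem_biUnion hI (I.oplus_mem hx (hJI hy))

theorem exists_le_oplus_nmul_of_maximal {c a : M} {I : Ideal M}
    (hI : Maximal (fun J : Ideal M => c ∉ J) I) (ha : a ∉ I) :
    ∃ i ∈ I, ∃ n, c ≤ oplus i (nmul n a) := by
  by_contra h
  exact ha (hI.2 (show c ∉ I.adjoin a from h) (le_adjoin I a) (mem_adjoin_self I a))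

theorem isPrime_of_maximal {c : M} {I : Ideal M} (hI : Maximal (fun J : Ideal M => c ∉ J) I) :
    I.IsPrime := by
  intro x y
  by_contra! h
  obtain ⟨i, hi, m, hci⟩ := exists_le_oplus_nmul_of_maximal hI h.1
  obtain ⟨j, hj, n, hcj⟩ := exists_le_oplus_nmul_of_maximal hI h.2
  -- `c` lies below `i ⊕ j` plus two multiples of disjoint elements, hence below `i ⊕ j`.
  refine hI.1 (I.mem_of_le ?_ (I.oplus_mem hi hj))
  calc c ≤ oplus (oplus i j) (nmul m (ominus x y)) ⊓ oplus (oplus i j) (nmul n (ominus y x)) :=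
        le_inf (hci.trans (oplus_le_oplus (le_self_oplus i j) le_rfl))
          (hcj.trans (oplus_le_oplus (le_oplus_self i j) le_rfl))
    _ = oplus i j := by
        rw [← oplus_inf, nmul_inf_nmul_eq_zero (ominus_inf_ominus_eq_zero x y), oplus_zero]

theorem exists_isPrime_not_mem {c : M} (hc : c ≠ 0) : ∃ P : Ideal M, P.IsPrime ∧ c ∉ P := by
  obtain ⟨P, -, hP⟩ := zorn_le_nonempty₀ {J : Ideal M | c ∉ J}
    (fun ch hch hchain I hI => ⟨chainUnion ch hchain ⟨I, hI⟩,
      fun hc => by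
        obtain ⟨J, hJ, hcJ⟩ := Set.mem_iUnion₂.1 hc
        exact hch hJ hcJ,
      fun J hJ x hx => Set.mem_biUnion hJ hx⟩)
    ⊥ (mt mem_bot.1 hc)
  exact ⟨P, isPrime_of_maximal hP, hP.1⟩

end Ideal

def Ideal.Quotient (I : Ideal M) : Type u := _root_.Quotient I.setoid

namespace Ideal.Quotient

variable {I : Ideal M}

def mk (x : M) : I.Quotient := _root_.Quotient.mk I.setoid x

theorem mk_surjective : Function.Surjective (mk : M → I.Quotient) := _root_.Quotient.mk_surjective

theorem mk_eq_mk {x y : M} : (mk x : I.Quotient) = mk y ↔ I.setoid x y := _root_.Quotient.eq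

def map₂ (f : M → M → M)
    (hf : ∀ {x x' y y' : M}, I.setoid x x' → I.setoid y y' → I.setoid (f x y) (f x' y')) :
    I.Quotient → I.Quotient → I.Quotient :=
  _root_.Quotient.map₂ f fun _ _ hx _ _ hy => hf hx hy

instance : Max I.Quotient := ⟨map₂ (· ⊔ ·) setoid_sup⟩
instance : Min I.Quotient := ⟨map₂ (· ⊓ ·) setoid_inf⟩

instance : DistribLattice I.Quotient :=
  letI : Lattice I.Quotient := Lattice.mk'
    (mk_surjective.forall₂.2 fun a b => congrArg mk (sup_comm a b))
    (mk_surjective.forall₃.2 fun a b c => congrArg mk (sup_assoc a b c))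
    (mk_surjective.forall₂.2 fun a b => congrArg mk (inf_comm a b))
    (mk_surjective.forall₃.2 fun a b c => congrArg mk (inf_assoc a b c))
    (mk_surjective.forall₂.2 fun _ _ => congrArg mk sup_inf_self)
    (mk_surjective.forall₂.2 fun _ _ => congrArg mk inf_sup_self)
  DistribLattice.ofInfSupLe
    (mk_surjective.forall₃.2 fun a b c => (congrArg mk (inf_sup_left a b c)).le)

theorem mk_le_mk_of_le {a b : M} (h : a ≤ b) : (mk a : I.Quotient) ≤ mk b :=
  inf_eq_left.1 (congrArg mk (inf_eq_left.2 h))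

theorem mk_le_mk_of_ominus_mem {a b : M} (h : ominus a b ∈ I) : (mk a : I.Quotient) ≤ mk b := by
  refine inf_eq_left.1 (mk_eq_mk.2 ⟨?_, ?_⟩)
  · rw [ominus_eq_zero_iff_le.2 inf_le_left]
    exact I.zero_mem
  · rwa [ominus_inf]

instance : WEMV I.Quotient where
  zero := mk 0
  oplus := map₂ oplus setoid_oplus
  ominus := map₂ ominus setoid_ominus
  zero_le := mk_surjective.forall.2 fun a => mk_le_mk_of_le (zero_le a)
  oplus_comm := mk_surjective.forall₂.2 fun a b => congrArg mk (oplus_comm a b)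
  oplus_assoc := mk_surjective.forall₃.2 fun a b c => congrArg mk (oplus_assoc a b c)
  oplus_zero := mk_surjective.forall.2 fun a => congrArg mk (oplus_zero a)
  ominus_oplus_le := mk_surjective.forall₂.2 fun a b => mk_le_mk_of_le (ominus_oplus_le a b)
  oplus_ominus := mk_surjective.forall₂.2 fun a b => congrArg mk (oplus_ominus a b)
  ominus_inf := mk_surjective.forall₂.2 fun a b => congrArg mk (ominus_inf a b)
  ominus_ominus := mk_surjective.forall₂.2 fun a b => congrArg mk (ominus_ominus a b)
  ominus_sup := mk_surjective.forall₃.2 fun a b c => congrArg mk (ominus_sup a b c)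
  inf_ominus := mk_surjective.forall₃.2 fun a b c => congrArg mk (inf_ominus a b c)
  ominus_oplus_assoc :=
    mk_surjective.forall₃.2 fun a b c => congrArg mk (ominus_oplus_assoc a b c)
  oplus_sup := mk_surjective.forall₃.2 fun a b c => congrArg mk (oplus_sup a b c)

theorem le_total_of_isPrime (hI : I.IsPrime) (x y : I.Quotient) : x ≤ y ∨ y ≤ x := by
  obtain ⟨a, rfl⟩ := mk_surjective x
  obtain ⟨b, rfl⟩ := mk_surjective y
  exact (hI a b).imp mk_le_mk_of_ominus_mem mk_le_mk_of_ominus_mem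

end Ideal.Quotient

theorem isWEMVEmbedding_mk_pi :
    IsWEMVEmbedding fun (x : M) (P : {P : Ideal M // P.IsPrime}) =>
      (Ideal.Quotient.mk x : P.1.Quotient) := by
  refine ⟨fun x y hxy => ?_, rfl,
    fun _ _ => rfl, fun _ _ => rfl, fun _ _ => rfl, fun _ _ => rfl⟩
  have hmem : ∀ P : Ideal M, P.IsPrime → ominus x y ∈ P ∧ ominus y x ∈ P :=
    fun P hP => Ideal.Quotient.mk_eq_mk.1 (congrFun hxy ⟨P, hP⟩)
  have eq_zero : ∀ {c : M}, (∀ P : Ideal M, P.IsPrime → c ∈ P) → c = 0 := fun h => by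
    by_contra hc
    obtain ⟨P, hP, hcP⟩ := Ideal.exists_isPrime_not_mem hc
    exact hcP (h P hP)
  exact le_antisymm (ominus_eq_zero_iff_le.1 (eq_zero fun P hP => (hmem P hP).1))
    (ominus_eq_zero_iff_le.1 (eq_zero fun P hP => (hmem P hP).2))

theorem ominus_inf_le_ominus_oplus {x y z : M} (hz : oplus x y ≤ z) :
    ominus z x ⊓ y ≤ ominus (oplus x y) x := by
  set r := ominus (oplus x y) x
  set d := ominus z (oplus x y)
  have hsplit : ominus z x ⊓ y = ominus (ominus z x) d :=
    calc ominus z x ⊓ y = ominus z x ⊓ ominus z (ominus z y) := by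
          rw [ominus_ominus, inf_eq_left.2 ((le_oplus_self x y).trans hz)]
      _ = ominus z (x ⊔ ominus z y) := (ominus_sup _ _ _).symm
      _ = ominus z (oplus x d) := by rw [← oplus_ominus x, ← ominus_oplus_assoc, oplus_comm y x]
      _ = ominus (ominus z x) d := ominus_oplus_assoc _ _ _
  have hle : ominus z x ≤ oplus r d :=
    calc ominus z x ≤ oplus r (ominus (ominus z x) r) := le_oplus_ominus _ _
      _ = oplus r d := by
          rw [← ominus_oplus_assoc, oplus_ominus, sup_eq_right.2 (le_self_oplus x y)]
  rw [hsplit]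
  exact (ominus_le_ominus_right hle d).trans (ominus_oplus_le_right r d)

theorem ominus_oplus_cancel_of_linear (hlin : ∀ a b : M, a ≤ b ∨ b ≤ a) (htop : ¬HasTop M)
    (x y : M) : ominus (oplus x y) x = y := by
  refine le_antisymm (ominus_oplus_le x y) ?_
  by_contra hy
  set t := oplus x y
  refine htop ⟨t, fun z => (le_sup_left : z ≤ z ⊔ t).trans ?_⟩
  have hkey : ominus (z ⊔ t) x ⊓ y ≤ ominus t x := ominus_inf_le_ominus_oplus le_sup_right
  rcases hlin (ominus (z ⊔ t) x) y with hle | hge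
  · calc z ⊔ t = oplus x (ominus (z ⊔ t) x) :=
          (oplus_ominus_cancel_of_le ((le_self_oplus x y).trans le_sup_right)).symm
      _ ≤ oplus x (ominus t x) := oplus_le_oplus le_rfl (inf_eq_left.2 hle ▸ hkey)
      _ = t := oplus_ominus_cancel_of_le (le_self_oplus x y)
  · exact absurd (inf_eq_right.2 hge ▸ hkey) hy

/-- `lo a` is the element `a` and `hi a` its formal complement `1 ⊖ a`, as in Chang's
MV-algebra, which is this construction applied to `ℕ`. -/
inductive Chang (C : Type u) : Type u
  | lo : C → Chang C
  | hi : C → Chang C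

namespace Chang

variable {C : Type u}

-- `Chang C` is the ordinal sum of `C` and `Cᵒᵈ`, embedded by `toProd` into a product lattice.
def toProd : Chang C → WithTop C × WithBot Cᵒᵈ
  | lo a => (a, ⊥)
  | hi a => (⊤, ((OrderDual.toDual a : Cᵒᵈ) : WithBot Cᵒᵈ))

theorem toProd_injective : Function.Injective (toProd : Chang C → _) := by
  rintro (a | a) (b | b) h <;> simp_all [toProd]

section DistribLattice

variable [DistribLattice C]

instance : Max (Chang C) where
  max
    | lo a, lo b => lo (a ⊔ b)
    | lo _, hi b => hi b
    | hi a, lo _ => hi a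
    | hi a, hi b => hi (a ⊓ b)

instance : Min (Chang C) where
  min
    | lo a, lo b => lo (a ⊓ b)
    | lo a, hi _ => lo a
    | hi _, lo b => lo b
    | hi a, hi b => hi (a ⊔ b)

@[simp] theorem lo_sup_lo (a b : C) : lo a ⊔ lo b = lo (a ⊔ b) := rfl
@[simp] theorem lo_sup_hi (a b : C) : lo a ⊔ hi b = hi b := rfl
@[simp] theorem hi_sup_lo (a b : C) : hi a ⊔ lo b = hi a := rfl
@[simp] theorem hi_sup_hi (a b : C) : hi a ⊔ hi b = hi (a ⊓ b) := rfl
@[simp] theorem lo_inf_lo (a b : C) : lo a ⊓ lo b = lo (a ⊓ b) := rfl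
@[simp] theorem lo_inf_hi (a b : C) : lo a ⊓ hi b = lo a := rfl
@[simp] theorem hi_inf_lo (a b : C) : hi a ⊓ lo b = lo b := rfl
@[simp] theorem hi_inf_hi (a b : C) : hi a ⊓ hi b = hi (a ⊔ b) := rfl

instance : LE (Chang C) := ⟨fun x y => toProd x ≤ toProd y⟩
instance : LT (Chang C) := ⟨fun x y => toProd x < toProd y⟩

instance : DistribLattice (Chang C) :=
  toProd_injective.distribLattice _ Iff.rfl Iff.rfl
    (by rintro (a | a) (b | b) <;> simp [toProd])
    (by rintro (a | a) (b | b) <;> simp [toProd])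

@[simp] theorem lo_le_lo {a b : C} : (lo a : Chang C) ≤ lo b ↔ a ≤ b := by
  change toProd (lo a) ≤ toProd (lo b) ↔ _
  simp [toProd]

@[simp] theorem lo_le_hi (a b : C) : (lo a : Chang C) ≤ hi b := by
  change toProd (lo a) ≤ toProd (hi b)
  simp [toProd]

@[simp] theorem hi_le_hi {a b : C} : (hi a : Chang C) ≤ hi b ↔ b ≤ a := by
  change toProd (hi a) ≤ toProd (hi b) ↔ _
  simp [toProd]

end DistribLattice

variable [WEMV C]

def add : Chang C → Chang C → Chang C
  | lo a, lo b => lo (oplus a b)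
  | lo a, hi b => hi (ominus b a)
  | hi a, lo b => hi (ominus a b)
  | hi _, hi _ => hi 0

def sub : Chang C → Chang C → Chang C
  | lo a, lo b => lo (ominus a b)
  | lo _, hi _ => lo 0
  | hi a, lo b => hi (oplus a b)
  | hi a, hi b => lo (ominus b a)

instance : Zero (Chang C) := ⟨lo 0⟩

abbrev instWEMV (canc : ∀ a b : C, ominus (oplus a b) a = b) : WEMV (Chang C) where
  oplus := add
  ominus := sub
  zero_le := by rintro (a | a); exacts [lo_le_lo.2 (zero_le a), lo_le_hi 0 a]
  oplus_comm := by rintro (a | a) (b | b) <;> simp [add, oplus_comm]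
  oplus_assoc := by
    rintro (a | a) (b | b) (c | c) <;>
      simp [add, ← ominus_oplus_assoc, oplus_comm, oplus_left_comm]
  oplus_zero := by rintro (a | a) <;> simp [add]
  ominus_oplus_le := by
    rintro (a | a) (b | b) <;>
      simp [add, sub, ominus_oplus_le, ominus_ominus, le_oplus_ominus, oplus_comm]
  oplus_ominus := by
    rintro (a | a) (b | b) <;>
      simp [add, sub, oplus_ominus, canc, ominus_ominus, oplus_comm, inf_comm]
  ominus_inf := by rintro (a | a) (b | b) <;> simp [sub, ominus_inf, canc, ← oplus_ominus]
  ominus_ominus := by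
    rintro (a | a) (b | b) <;> simp [sub, ominus_ominus, canc, oplus_ominus, sup_comm]
  ominus_sup := by
    rintro (a | a) (b | b) (c | c) <;> simp [sub, ominus_sup, oplus_sup, inf_ominus, zero_le]
  inf_ominus := by
    rintro (a | a) (b | b) (c | c) <;>
      simp [sub, inf_ominus, ominus_sup, oplus_sup, zero_le, oplus_comm]
  ominus_oplus_assoc := by
    rintro (a | a) (b | b) (c | c) <;>
      simp [add, sub, ominus_oplus_assoc, oplus_comm, oplus_left_comm, ominus_right_comm]
  oplus_sup := by
    rintro (a | a) (b | b) (c | c) <;> simp [add, oplus_sup, inf_ominus, ominus_sup, zero_le]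

end Chang

theorem exists_hasTop_embedding_of_linear (hlin : ∀ a b : M, a ≤ b ∨ b ≤ a) :
    ∃ (N : Type u) (_ : WEMV N) (f : M → N), HasTop N ∧ IsWEMVEmbedding f := by
  by_cases htop : HasTop M
  · exact ⟨M, inferInstance, id, htop, Function.injective_id, rfl,
      fun _ _ => rfl, fun _ _ => rfl, fun _ _ => rfl, fun _ _ => rfl⟩
  let _ := Chang.instWEMV (ominus_oplus_cancel_of_linear hlin htop)
  refine ⟨Chang M, inferInstance, Chang.lo, ⟨Chang.hi 0, ?_⟩, fun _ _ => Chang.lo.inj, rfl,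
    fun _ _ => rfl, fun _ _ => rfl, fun _ _ => rfl, fun _ _ => rfl⟩
  rintro (a | a)
  · exact Chang.lo_le_hi a 0
  · exact Chang.hi_le_hi.2 (zero_le a)

end WEMV

theorem stmt18 (M : Type u) [WEMV M] :
    ∃ (N : Type u) (instN : WEMV N) (f : M → N),
      @HasTop N instN ∧ @IsWEMVEmbedding M _ N instN f := by
  choose N instN f hTop hEmb using fun P : {P : Ideal M // P.IsPrime} =>
    exists_hasTop_embedding_of_linear (Ideal.Quotient.le_total_of_isPrime P.2)
  exact ⟨∀ P, N P, inferInstance, _, hasTop_pi hTop,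
    (IsWEMVEmbedding.piMap hEmb).comp isWEMVEmbedding_mk_pi⟩
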